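/- arXiv:2508.08716 — 5 statements merged into one kernel-verified Lean document; each statement's English description precedes it below -/
import Mathlib

section
/- For all vectors a, b in ℝ^n and real p ≥ 2, one has the lower bound ⟨|b|^{p-2} b − |a|^{p-2} a, b − a⟩ ≥ (4/p²) · ‖ |b|^{(p-2)/2} b − |a|^{(p-2)/2} a ‖². -/
/-!
Write `u = ‖a‖ ^ ((p - 2) / 2)` and `v = ‖b‖ ^ ((p - 2) / 2)`. Both sides are affine in `⟪a, b⟫`,
and for `c ≤ 1` (here `c = 4 / p²`) the difference `⟪v² b - u² a, b - a⟫ - c ‖v b - u a‖²`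
decreases in `⟪a, b⟫` with slope `-(u² + v² - 2cuv) ≤ 0`; by Cauchy–Schwarz it is therefore
smallest when `a` and `b` point in the same direction, which leaves the scalar inequality
`(2 / p) (x ^ (p/2) - y ^ (p/2))² ≤ (x ^ (p-1) - y ^ (p-1)) (x - y)` for `x, y ≥ 0`.
For `y ≤ x` this is the product of `x ^ (p/2) - y ^ (p/2) ≤ (p/2) x ^ (p/2-1) (x - y)` (convexity
of `t ↦ t ^ (p/2)`, i.e. Bernoulli) and `x ^ (p/2-1) (x ^ (p/2) - y ^ (p/2)) ≤ x ^ (p-1) - y ^ (p-1)`.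
-/

open Real

open scoped RealInnerProductSpace

lemma rpow_sub_rpow_le_mul_sub {r x y : ℝ} (hr : 1 ≤ r) (hx : 0 < x) (hy : 0 ≤ y) :
    x ^ r - y ^ r ≤ r * x ^ (r - 1) * (x - y) := by
  have hbern := one_add_mul_self_le_rpow_one_add (s := y / x - 1)
    (by linarith [div_nonneg hy hx.le]) hr
  rw [add_sub_cancel, div_rpow hy hx.le, le_div_iff₀ (rpow_pos_of_pos hx r)] at hbern
  have hexpand : (1 + r * (y / x - 1)) * x ^ r = x ^ r - r * (x ^ r / x) * (x - y) := by
    field_simp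
    ring
  rw [rpow_sub_one hx.ne']
  linarith

lemma div_mul_rpow_half_sub_sq_le_of_le {p x y : ℝ} (hp : 2 ≤ p) (hy : 0 ≤ y) (hyx : y ≤ x) :
    2 / p * (x ^ (p / 2) - y ^ (p / 2)) ^ 2 ≤ (x ^ (p - 1) - y ^ (p - 1)) * (x - y) := by
  rcases (hy.trans hyx).eq_or_lt with rfl | hx
  · obtain rfl : y = 0 := le_antisymm hyx hy
    simp
  set D := x ^ (p / 2) - y ^ (p / 2)
  have hD : 0 ≤ D := sub_nonneg.2 (rpow_le_rpow hy hyx (by linarith))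
  have htangent : D ≤ p / 2 * x ^ (p / 2 - 1) * (x - y) :=
    rpow_sub_rpow_le_mul_sub (by linarith) hx hy
  have hsplit : ∀ t : ℝ, 0 ≤ t → t ^ (p - 1) = t ^ (p / 2 - 1) * t ^ (p / 2) := fun t ht => by
    rw [← rpow_add' ht (by linarith)]
    ring_nf
  have hweighted : x ^ (p / 2 - 1) * D ≤ x ^ (p - 1) - y ^ (p - 1) := by
    rw [hsplit x hx.le, hsplit y hy]
    have : y ^ (p / 2 - 1) ≤ x ^ (p / 2 - 1) := rpow_le_rpow hy hyx (by linarith)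
    nlinarith [rpow_nonneg hy (p / 2)]
  calc 2 / p * D ^ 2 = 2 / p * D * D := by ring
    _ ≤ 2 / p * D * (p / 2 * x ^ (p / 2 - 1) * (x - y)) := by gcongr
    _ = (x ^ (p / 2 - 1) * D) * (x - y) := by field_simp
    _ ≤ (x ^ (p - 1) - y ^ (p - 1)) * (x - y) := by gcongr

lemma div_mul_rpow_half_sub_sq_le {p x y : ℝ} (hp : 2 ≤ p) (hx : 0 ≤ x) (hy : 0 ≤ y) :
    2 / p * (x ^ (p / 2) - y ^ (p / 2)) ^ 2 ≤ (x ^ (p - 1) - y ^ (p - 1)) * (x - y) := by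
  rcases le_total y x with hyx | hxy
  · exact div_mul_rpow_half_sub_sq_le_of_le hp hy hyx
  · calc 2 / p * (x ^ (p / 2) - y ^ (p / 2)) ^ 2 = 2 / p * (y ^ (p / 2) - x ^ (p / 2)) ^ 2 := by
          ring
      _ ≤ (y ^ (p - 1) - x ^ (p - 1)) * (y - x) := div_mul_rpow_half_sub_sq_le_of_le hp hx hxy
      _ = (x ^ (p - 1) - y ^ (p - 1)) * (x - y) := by ring

lemma mul_norm_smul_sub_smul_sq_le_inner_of_norm {E : Type*} [NormedAddCommGroup E]
    [InnerProductSpace ℝ E] {c u v : ℝ} (hc : c ≤ 1) (hu : 0 ≤ u) (hv : 0 ≤ v) (a b : E)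
    (hnorm : c * (v * ‖b‖ - u * ‖a‖) ^ 2 ≤ (v ^ 2 * ‖b‖ - u ^ 2 * ‖a‖) * (‖b‖ - ‖a‖)) :
    c * ‖v • b - u • a‖ ^ 2 ≤ ⟪v ^ 2 • b - u ^ 2 • a, b - a⟫ := by
  have hleft : ‖v • b - u • a‖ ^ 2 = v ^ 2 * ‖b‖ ^ 2 - 2 * (u * v) * ⟪a, b⟫ + u ^ 2 * ‖a‖ ^ 2 := by
    rw [norm_sub_sq_real, norm_smul, norm_smul, real_inner_smul_left, real_inner_smul_right,
      real_inner_comm, Real.norm_of_nonneg hu, Real.norm_of_nonneg hv]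
    ring
  have hright : ⟪v ^ 2 • b - u ^ 2 • a, b - a⟫
      = v ^ 2 * ‖b‖ ^ 2 + u ^ 2 * ‖a‖ ^ 2 - (u ^ 2 + v ^ 2) * ⟪a, b⟫ := by
    simp only [inner_sub_left, inner_sub_right, real_inner_smul_left, real_inner_self_eq_norm_sq,
      real_inner_comm a b]
    ring
  have hslope : 0 ≤ u ^ 2 + v ^ 2 - 2 * c * (u * v) := by
    nlinarith [sq_nonneg (u - v), mul_nonneg hu hv]
  rw [hleft, hright]
  nlinarith [mul_nonneg hslope (sub_nonneg.2 (real_inner_le_norm a b))]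

/-- `⟨|b|^{p-2} b − |a|^{p-2} a, b − a⟩ ≥ (4/p²) ‖|b|^{(p-2)/2} b − |a|^{(p-2)/2} a‖²` for `p ≥ 2`. -/
theorem strong_monotonicity_half_powers {n : ℕ} (p : ℝ) (hp : 2 ≤ p)
    (a b : EuclideanSpace ℝ (Fin n)) :
    (4 / p ^ 2) * ‖‖b‖ ^ ((p - 2) / 2) • b - ‖a‖ ^ ((p - 2) / 2) • a‖ ^ 2 ≤
      ⟪‖b‖ ^ (p - 2) • b - ‖a‖ ^ (p - 2) • a, b - a⟫ := by
  have hsq : ∀ t : ℝ, 0 ≤ t → t ^ (p - 2) = (t ^ ((p - 2) / 2)) ^ 2 := fun t ht => by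
    rw [← rpow_mul_natCast ht]
    ring_nf
  have hhalf : ∀ t : ℝ, 0 ≤ t → t ^ ((p - 2) / 2) * t = t ^ (p / 2) := fun t ht => by
    rw [← rpow_add_one' ht (by linarith)]
    ring_nf
  have hpred : ∀ t : ℝ, 0 ≤ t → (t ^ ((p - 2) / 2)) ^ 2 * t = t ^ (p - 1) := fun t ht => by
    rw [← hsq t ht, ← rpow_add_one' ht (by linarith)]
    ring_nf
  have hcoef : 4 / p ^ 2 ≤ 2 / p := by
    rw [div_le_div_iff₀ (by positivity) (by linarith)]
    nlinarith
  rw [hsq _ (norm_nonneg b), hsq _ (norm_nonneg a)]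
  refine mul_norm_smul_sub_smul_sq_le_inner_of_norm (hcoef.trans ((div_le_one (by linarith)).2 hp))
    (rpow_nonneg (norm_nonneg a) _) (rpow_nonneg (norm_nonneg b) _) a b ?_
  rw [hhalf _ (norm_nonneg a), hhalf _ (norm_nonneg b), hpred _ (norm_nonneg a),
    hpred _ (norm_nonneg b)]
  calc 4 / p ^ 2 * (‖b‖ ^ (p / 2) - ‖a‖ ^ (p / 2)) ^ 2
      ≤ 2 / p * (‖b‖ ^ (p / 2) - ‖a‖ ^ (p / 2)) ^ 2 := by gcongr
    _ ≤ _ := div_mul_rpow_half_sub_sq_le hp (norm_nonneg b) (norm_nonneg a)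
end

section
/- For all vectors a, b in ℝ^n and real p ≥ 2, one has 2^{2−p} ‖b − a‖^p ≤ ⟨|b|^{p-2} b − |a|^{p-2} a, b − a⟩. -/
/-!
Writing `x = ‖b‖`, `y = ‖a‖` and `c = ⟪b, a⟫`, the right-hand side is affine in `c`, while the
left-hand side `2^{2-p} (x² - 2c + y²)^{p/2}` is convex in `c`. Hence it suffices to check the
inequality at the extreme values `c = ∓xy` allowed by Cauchy–Schwarz, where it becomes
`2^{2-p} (x + y)^p ≤ (x^{p-1} + y^{p-1})(x + y)` (the power-mean inequality for `t ↦ t^{p-1}`) and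
`2^{2-p} |x - y|^p ≤ (x^{p-1} - y^{p-1})(x - y)` (superadditivity of `t ↦ t^{p-1}`).
-/

open scoped RealInnerProductSpace

namespace Real

lemma rpow_add_le_two_rpow_mul_add_rpow {p a b : ℝ} (ha : 0 ≤ a) (hb : 0 ≤ b) (hp : 1 ≤ p) :
    (a + b) ^ p ≤ 2 ^ (p - 1) * (a ^ p + b ^ p) := by
  lift a to NNReal using ha
  lift b to NNReal using hb
  exact_mod_cast NNReal.rpow_add_le_mul_rpow_add_rpow a b hp

lemma abs_sub_rpow_le_abs_rpow_sub_rpow {p a b : ℝ} (ha : 0 ≤ a) (hb : 0 ≤ b) (hp : 1 ≤ p) :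
    |a - b| ^ p ≤ |a ^ p - b ^ p| := by
  wlog hba : b ≤ a generalizing a b
  · rw [abs_sub_comm, abs_sub_comm (a ^ p)]
    exact this hb ha (le_of_not_ge hba)
  have hsub : 0 ≤ a - b := sub_nonneg.2 hba
  have hsuper := add_rpow_le_rpow_add hsub hb hp
  rw [sub_add_cancel] at hsuper
  rw [abs_of_nonneg hsub, abs_of_nonneg (by linarith [rpow_nonneg hsub p])]
  linarith

lemma sq_rpow_div_two {x : ℝ} (hx : 0 ≤ x) (p : ℝ) : (x ^ 2) ^ (p / 2) = x ^ p := by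
  rw [← rpow_natCast_mul hx]
  congr 1
  push_cast
  ring

end Real

open Real

section ScalarInequality

variable {p x y : ℝ}

lemma two_rpow_mul_add_rpow_le (hp : 2 ≤ p) (hx : 0 ≤ x) (hy : 0 ≤ y) :
    2 ^ (2 - p) * (x + y) ^ p ≤ (x ^ (p - 1) + y ^ (p - 1)) * (x + y) := by
  have hxy : 0 ≤ x + y := add_nonneg hx hy
  have hcancel : (2 : ℝ) ^ (2 - p) * 2 ^ (p - 2) = 1 := by
    rw [← rpow_add two_pos]
    simp
  calc 2 ^ (2 - p) * (x + y) ^ p = 2 ^ (2 - p) * (x + y) ^ (p - 1) * (x + y) := by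
        rw [mul_assoc, ← rpow_add_one' hxy (by linarith), sub_add_cancel]
    _ ≤ 2 ^ (2 - p) * (2 ^ (p - 2) * (x ^ (p - 1) + y ^ (p - 1))) * (x + y) := by
        gcongr
        have hmean := rpow_add_le_two_rpow_mul_add_rpow hx hy (by linarith : 1 ≤ p - 1)
        rwa [show p - 1 - 1 = p - 2 by ring] at hmean
    _ = (x ^ (p - 1) + y ^ (p - 1)) * (x + y) := by
        rw [← mul_assoc, hcancel, one_mul]

lemma two_rpow_mul_abs_sub_rpow_le (hp : 2 ≤ p) (hx : 0 ≤ x) (hy : 0 ≤ y) :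
    2 ^ (2 - p) * |x - y| ^ p ≤ (x ^ (p - 1) - y ^ (p - 1)) * (x - y) := by
  have hmono : 0 ≤ (x ^ (p - 1) - y ^ (p - 1)) * (x - y) := by
    rcases le_total y x with hyx | hxy
    · exact mul_nonneg (sub_nonneg.2 (by gcongr; linarith)) (sub_nonneg.2 hyx)
    · exact mul_nonneg_of_nonpos_of_nonpos (sub_nonpos.2 (by gcongr; linarith))
        (sub_nonpos.2 hxy)
  calc 2 ^ (2 - p) * |x - y| ^ p ≤ |x - y| ^ p :=
        mul_le_of_le_one_left (rpow_nonneg (abs_nonneg _) _)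
          (rpow_le_one_of_one_le_of_nonpos one_le_two (by linarith))
    _ = |x - y| ^ (p - 1) * |x - y| := by
        rw [← rpow_add_one' (abs_nonneg _) (by linarith), sub_add_cancel]
    _ ≤ |x ^ (p - 1) - y ^ (p - 1)| * |x - y| := by
        gcongr
        exact abs_sub_rpow_le_abs_rpow_sub_rpow hx hy (by linarith)
    _ = (x ^ (p - 1) - y ^ (p - 1)) * (x - y) := by
        rw [← abs_mul, abs_of_nonneg hmono]

lemma two_rpow_mul_rpow_le_of_abs_le_mul {c : ℝ} (hp : 2 ≤ p) (hx : 0 ≤ x) (hy : 0 ≤ y)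
    (hc : |c| ≤ x * y) :
    2 ^ (2 - p) * (x ^ 2 - 2 * c + y ^ 2) ^ (p / 2) ≤
      x ^ (p - 2) * (x ^ 2 - c) + y ^ (p - 2) * (y ^ 2 - c) := by
  obtain ⟨s, t, hs, ht, hst, rfl⟩ : c ∈ segment ℝ (-(x * y)) (x * y) := by
    rw [segment_eq_Icc (by linarith [abs_nonneg c])]
    exact abs_le.1 hc
  have hx1 : x ^ (p - 1) = x ^ (p - 2) * x := by
    rw [← rpow_add_one' hx (by linarith)]
    congr 1
    ring
  have hy1 : y ^ (p - 1) = y ^ (p - 2) * y := by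
    rw [← rpow_add_one' hy (by linarith)]
    congr 1
    ring
  simp only [smul_eq_mul]
  calc 2 ^ (2 - p) * (x ^ 2 - 2 * (s * -(x * y) + t * (x * y)) + y ^ 2) ^ (p / 2)
      = 2 ^ (2 - p) * (s * (x + y) ^ 2 + t * (x - y) ^ 2) ^ (p / 2) := by
        congr 2
        linear_combination (-(x ^ 2) - y ^ 2) * hst
    _ ≤ 2 ^ (2 - p) * (s * ((x + y) ^ 2) ^ (p / 2) + t * ((x - y) ^ 2) ^ (p / 2)) := by
        gcongr
        exact (convexOn_rpow (by linarith)).2 (Set.mem_Ici.2 (sq_nonneg _))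
          (Set.mem_Ici.2 (sq_nonneg _)) hs ht hst
    _ = s * (2 ^ (2 - p) * (x + y) ^ p) + t * (2 ^ (2 - p) * |x - y| ^ p) := by
        rw [sq_rpow_div_two (add_nonneg hx hy), ← sq_abs (x - y),
          sq_rpow_div_two (abs_nonneg _)]
        ring
    _ ≤ s * ((x ^ (p - 1) + y ^ (p - 1)) * (x + y)) +
          t * ((x ^ (p - 1) - y ^ (p - 1)) * (x - y)) := by
        gcongr s * ?_ + t * ?_
        · exact two_rpow_mul_add_rpow_le hp hx hy
        · exact two_rpow_mul_abs_sub_rpow_le hp hx hy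
    _ = x ^ (p - 2) * (x ^ 2 - (s * -(x * y) + t * (x * y))) +
          y ^ (p - 2) * (y ^ 2 - (s * -(x * y) + t * (x * y))) := by
        rw [hx1, hy1]
        linear_combination (x ^ (p - 2) * x ^ 2 + y ^ (p - 2) * y ^ 2) * hst

end ScalarInequality

lemma inner_smul_sub_smul_sub {E : Type*} [NormedAddCommGroup E] [InnerProductSpace ℝ E]
    (α β : ℝ) (a b : E) :
    ⟪β • b - α • a, b - a⟫ = β * (‖b‖ ^ 2 - ⟪b, a⟫) + α * (‖a‖ ^ 2 - ⟪b, a⟫) := by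
  simp only [inner_sub_left, inner_sub_right, real_inner_smul_left, real_inner_self_eq_norm_sq,
    real_inner_comm b a]
  ring

/-- `2^{2−p} ‖b − a‖^p ≤ ⟨|b|^{p-2} b − |a|^{p-2} a, b − a⟩` for `p ≥ 2`. -/
theorem strong_monotonicity_p_power {n : ℕ} (p : ℝ) (hp : 2 ≤ p)
    (a b : EuclideanSpace ℝ (Fin n)) :
    (2 : ℝ) ^ (2 - p) * ‖b - a‖ ^ p ≤
      ⟪‖b‖ ^ (p - 2) • b - ‖a‖ ^ (p - 2) • a, b - a⟫ := by
  rw [inner_smul_sub_smul_sub, ← sq_rpow_div_two (norm_nonneg _), norm_sub_sq_real]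
  exact two_rpow_mul_rpow_le_of_abs_le_mul hp (norm_nonneg b) (norm_nonneg a)
    (abs_real_inner_le_norm b a)
end

section
/- For all vectors a, b in ℝ^n and real p with 1 < p ≤ 2, ⟨|b|^{p-2} b − |a|^{p-2} a, b − a⟩ ≥ (p−1) ‖b − a‖² / (1 + ‖a‖² + ‖b‖²)^{(2−p)/2}. -/
/-!
Write `A = ‖a‖`, `B = ‖b‖`, `t = ⟪a, b⟫` and `s = (1 + A² + B²) ^ ((p - 2) / 2)`. Both sides are
affine in `t`, and Cauchy–Schwarz confines `t` to `[-A B, A B]`, so it suffices to check the two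
endpoints, i.e. `(p - 1) (A ± B)² s ≤ (A ± B) (A ^ (p - 1) ± B ^ (p - 1))`. Because `s` is at
most `A ^ (p - 2)` and `B ^ (p - 2)`, the `+` case follows from `x s ≤ x ^ (p - 1)`, and the `-`
case from the tangent-line inequality for the concave function `x ↦ x ^ (p - 1)` (Bernoulli's
inequality).
-/

open Real
open scoped RealInnerProductSpace

lemma rpow_sub_one_eq_rpow_sub_two_mul {x p : ℝ} (hx : 0 ≤ x) (hp : 1 < p) :
    x ^ (p - 1) = x ^ (p - 2) * x := by
  rw [← rpow_add_one' hx (by linarith)]; ring_nf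

lemma rpow_div_two_le_rpow_of_sq_le {p x S : ℝ} (hp : p ≤ 2) (hx : 0 < x) (hxS : x ^ 2 ≤ S) :
    S ^ ((p - 2) / 2) ≤ x ^ (p - 2) := by
  calc S ^ ((p - 2) / 2) ≤ (x ^ (2 : ℝ)) ^ ((p - 2) / 2) :=
        rpow_le_rpow_of_nonpos (by positivity) (by rwa [rpow_two]) (by linarith)
    _ = x ^ (p - 2) := by rw [← rpow_mul hx.le]; ring_nf

lemma mul_rpow_div_two_le_rpow_sub_one {p x S : ℝ} (hp1 : 1 < p) (hp2 : p ≤ 2) (hx : 0 ≤ x)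
    (hxS : x ^ 2 ≤ S) : x * S ^ ((p - 2) / 2) ≤ x ^ (p - 1) := by
  rcases hx.eq_or_lt with rfl | hx
  · simp [zero_rpow (by linarith : p - 1 ≠ 0)]
  · rw [rpow_sub_one_eq_rpow_sub_two_mul hx.le hp1, mul_comm x]
    exact mul_le_mul_of_nonneg_right (rpow_div_two_le_rpow_of_sq_le hp2 hx hxS) hx.le

lemma mul_rpow_sub_one_mul_sub_le_rpow_sub_rpow {q x y : ℝ} (hq0 : 0 < q) (hq1 : q ≤ 1)
    (hy : 0 ≤ y) (hyx : y ≤ x) : q * x ^ (q - 1) * (x - y) ≤ x ^ q - y ^ q := by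
  rcases (hy.trans hyx).eq_or_lt with rfl | hx
  · obtain rfl : y = 0 := le_antisymm hyx hy
    simp
  have hber := rpow_one_add_le_one_add_mul_self (s := y / x - 1)
    (by linarith [div_nonneg hy hx.le]) hq0.le hq1
  rw [add_sub_cancel, div_rpow hy hx.le, div_le_iff₀ (rpow_pos_of_pos hx q)] at hber
  have hxq : x ^ q = x ^ (q - 1) * x := by rw [← rpow_add_one' hx.le (by linarith)]; ring_nf
  have : (1 + q * (y / x - 1)) * x ^ q = x ^ q - q * x ^ (q - 1) * (x - y) := by
    rw [hxq]; field_simp; ring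
  linarith

lemma nonneg_of_abs_le_of_nonneg_add_of_nonneg_sub {c₀ c₁ t M : ℝ} (ht : |t| ≤ M)
    (hadd : 0 ≤ c₀ + c₁ * M) (hsub : 0 ≤ c₀ - c₁ * M) : 0 ≤ c₀ + c₁ * t := by
  obtain ⟨hl, hr⟩ := abs_le.mp ht
  rcases le_total 0 c₁ with h | h <;> nlinarith

lemma sub_one_mul_rpow_div_two_mul_sub_le {p A B S : ℝ} (hp1 : 1 < p) (hp2 : p ≤ 2)
    (hB : 0 ≤ B) (hBA : B ≤ A) (hAS : A ^ 2 ≤ S) :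
    (p - 1) * S ^ ((p - 2) / 2) * (A - B) ≤ A ^ (p - 1) - B ^ (p - 1) := by
  rcases (hB.trans hBA).eq_or_lt with rfl | hA
  · obtain rfl : B = 0 := le_antisymm hBA hB
    simp
  calc (p - 1) * S ^ ((p - 2) / 2) * (A - B) ≤ (p - 1) * A ^ (p - 1 - 1) * (A - B) := by
        rw [show p - 1 - 1 = p - 2 by ring]
        gcongr
        exact rpow_div_two_le_rpow_of_sq_le hp2 hA hAS
    _ ≤ A ^ (p - 1) - B ^ (p - 1) :=
        mul_rpow_sub_one_mul_sub_le_rpow_sub_rpow (by linarith) (by linarith) hB hBA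

lemma sub_one_mul_add_sq_mul_rpow_div_two_le {p A B S : ℝ} (hp1 : 1 < p) (hp2 : p ≤ 2)
    (hA : 0 ≤ A) (hB : 0 ≤ B) (hAS : A ^ 2 ≤ S) (hBS : B ^ 2 ≤ S) :
    (p - 1) * (A + B) ^ 2 * S ^ ((p - 2) / 2) ≤ (A + B) * (A ^ (p - 1) + B ^ (p - 1)) := by
  have hs : 0 ≤ S ^ ((p - 2) / 2) := rpow_nonneg ((sq_nonneg A).trans hAS) _
  calc (p - 1) * (A + B) ^ 2 * S ^ ((p - 2) / 2)
      ≤ (A + B) * (A * S ^ ((p - 2) / 2) + B * S ^ ((p - 2) / 2)) := by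
        nlinarith [mul_nonneg (sq_nonneg (A + B)) hs]
    _ ≤ (A + B) * (A ^ (p - 1) + B ^ (p - 1)) := by
        gcongr
        · exact mul_rpow_div_two_le_rpow_sub_one hp1 hp2 hA hAS
        · exact mul_rpow_div_two_le_rpow_sub_one hp1 hp2 hB hBS

lemma sub_one_mul_sub_sq_mul_rpow_div_two_le {p A B S : ℝ} (hp1 : 1 < p) (hp2 : p ≤ 2)
    (hA : 0 ≤ A) (hB : 0 ≤ B) (hAS : A ^ 2 ≤ S) (hBS : B ^ 2 ≤ S) :
    (p - 1) * (A - B) ^ 2 * S ^ ((p - 2) / 2) ≤ (A - B) * (A ^ (p - 1) - B ^ (p - 1)) := by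
  rcases le_total B A with hBA | hAB
  · have := sub_one_mul_rpow_div_two_mul_sub_le hp1 hp2 hB hBA hAS
    nlinarith [mul_le_mul_of_nonneg_left this (sub_nonneg.2 hBA)]
  · have := sub_one_mul_rpow_div_two_mul_sub_le hp1 hp2 hA hAB hBS
    nlinarith [mul_le_mul_of_nonneg_left this (sub_nonneg.2 hAB)]

lemma sub_one_mul_mul_rpow_div_two_le_of_abs_le {p A B S t : ℝ} (hp1 : 1 < p) (hp2 : p ≤ 2)
    (hA : 0 ≤ A) (hB : 0 ≤ B) (hAS : A ^ 2 ≤ S) (hBS : B ^ 2 ≤ S) (ht : |t| ≤ A * B) :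
    (p - 1) * (A ^ 2 + B ^ 2 - 2 * t) * S ^ ((p - 2) / 2) ≤
      A ^ (p - 2) * A ^ 2 + B ^ (p - 2) * B ^ 2 - (A ^ (p - 2) + B ^ (p - 2)) * t := by
  have hadd := sub_one_mul_add_sq_mul_rpow_div_two_le hp1 hp2 hA hB hAS hBS
  have hsub := sub_one_mul_sub_sq_mul_rpow_div_two_le hp1 hp2 hA hB hAS hBS
  rw [rpow_sub_one_eq_rpow_sub_two_mul hA hp1, rpow_sub_one_eq_rpow_sub_two_mul hB hp1] at hadd hsub
  have := nonneg_of_abs_le_of_nonneg_add_of_nonneg_sub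
    (c₀ := A ^ (p - 2) * A ^ 2 + B ^ (p - 2) * B ^ 2 -
      (p - 1) * (A ^ 2 + B ^ 2) * S ^ ((p - 2) / 2))
    (c₁ := 2 * (p - 1) * S ^ ((p - 2) / 2) - (A ^ (p - 2) + B ^ (p - 2))) ht
    (by linear_combination hsub) (by linear_combination hadd)
  linear_combination this

/-- For `1 < p ≤ 2`,
`⟨|b|^{p-2} b − |a|^{p-2} a, b − a⟩ ≥ (p−1) ‖b−a‖² / (1 + ‖a‖² + ‖b‖²)^{(2−p)/2}`. -/
theorem monotonicity_singular_case {n : ℕ} (p : ℝ) (hp1 : 1 < p) (hp2 : p ≤ 2)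
    (a b : EuclideanSpace ℝ (Fin n)) :
    (p - 1) * ‖b - a‖ ^ 2 / (1 + ‖a‖ ^ 2 + ‖b‖ ^ 2) ^ ((2 - p) / 2) ≤
      ⟪‖b‖ ^ (p - 2) • b - ‖a‖ ^ (p - 2) • a, b - a⟫ := by
  set S := 1 + ‖a‖ ^ 2 + ‖b‖ ^ 2
  have hS : 0 < S := by positivity
  have hlhs : (p - 1) * ‖b - a‖ ^ 2 / S ^ ((2 - p) / 2) =
      (p - 1) * (‖a‖ ^ 2 + ‖b‖ ^ 2 - 2 * ⟪a, b⟫) * S ^ ((p - 2) / 2) := by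
    rw [div_eq_mul_inv, ← rpow_neg hS.le, norm_sub_sq_real, real_inner_comm]
    ring_nf
  have hrhs : ⟪‖b‖ ^ (p - 2) • b - ‖a‖ ^ (p - 2) • a, b - a⟫ =
      ‖a‖ ^ (p - 2) * ‖a‖ ^ 2 + ‖b‖ ^ (p - 2) * ‖b‖ ^ 2 -
        (‖a‖ ^ (p - 2) + ‖b‖ ^ (p - 2)) * ⟪a, b⟫ := by
    simp only [inner_sub_left, inner_sub_right, real_inner_smul_left, real_inner_self_eq_norm_sq,
      real_inner_comm a b]
    ring
  rw [hlhs, hrhs]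
  exact sub_one_mul_mul_rpow_div_two_le_of_abs_le hp1 hp2 (norm_nonneg a) (norm_nonneg b)
    (by simp only [S]; nlinarith [sq_nonneg ‖b‖]) (by simp only [S]; nlinarith [sq_nonneg ‖a‖])
    (abs_real_inner_le_norm a b)
end

section
/- For all real numbers a, b and real p ≥ 2, one has the bound | |b|^{p-2} b − |a|^{p-2} a | ≤ (p−1) (|b|^{(p-2)/2} + |a|^{(p-2)/2}) · | |b|^{(p-2)/2} b − |a|^{(p-2)/2} a |. -/
/-!
Put `q = (p - 2) / 2`, `u = |b|^q b`, `v = |a|^q a` and `α = q / (q + 1)`. Since `|u| = |b|^(q+1)`,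
the signed power `|u|^α u` equals `|b|^(2q) b = |b|^(p-2) b`, so the left-hand side is
`| |u|^α u - |v|^α v |`. The signed power of exponent `α ≥ 0` satisfies the local Lipschitz bound
`| |u|^α u - |v|^α v | ≤ (α + 1) max(|u|, |v|)^α |u - v|`: for `u, v` of the same sign this is the
tangent-line inequality of the convex function `t ↦ t^(α+1)`, and for opposite signs it is immediate.
Finally `max(|u|, |v|)^α = max(|b|^q, |a|^q)` and `α + 1 ≤ p - 1`.
-/

open Real

lemma rpow_sub_rpow_le_mul_sub_s5 {c s t : ℝ} (hc : 1 ≤ c) (hs : 0 ≤ s) (hst : s ≤ t) :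
    t ^ c - s ^ c ≤ c * t ^ (c - 1) * (t - s) := by
  rcases hst.eq_or_lt with rfl | hlt
  · simp
  have hslope := (convexOn_rpow hc).slope_le_of_hasDerivAt hs (hs.trans hlt.le) hlt
    (hasDerivAt_rpow_const (Or.inr hc))
  rwa [slope_def_field, div_le_iff₀ (sub_pos.2 hlt)] at hslope

noncomputable def signedPow (r s : ℝ) : ℝ := |s| ^ r * s

section signedPow

variable {r : ℝ}

lemma signedPow_neg (r s : ℝ) : signedPow r (-s) = -signedPow r s := by
  simp [signedPow]

lemma signedPow_of_nonneg {s : ℝ} (hr : 0 ≤ r) (hs : 0 ≤ s) : signedPow r s = s ^ (r + 1) := by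
  rw [signedPow, abs_of_nonneg hs, rpow_add_one' hs (by linarith)]

lemma abs_signedPow (hr : 0 ≤ r) (s : ℝ) : |signedPow r s| = |s| ^ (r + 1) := by
  rw [signedPow, abs_mul, abs_of_nonneg (rpow_nonneg (abs_nonneg s) r),
    rpow_add_one' (abs_nonneg s) (by linarith)]

lemma abs_signedPow_rpow_div (hr : 0 ≤ r) (s : ℝ) :
    |signedPow r s| ^ (r / (r + 1)) = |s| ^ r := by
  rw [abs_signedPow hr, ← rpow_mul (abs_nonneg s), mul_div_cancel₀ _ (by linarith)]

lemma signedPow_div_signedPow (hr : 0 ≤ r) (s : ℝ) :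
    signedPow (r / (r + 1)) (signedPow r s) = signedPow (2 * r) s := by
  rw [signedPow, abs_signedPow_rpow_div hr, signedPow, signedPow, two_mul,
    rpow_add_of_nonneg (abs_nonneg s) hr hr, mul_assoc]

lemma abs_signedPow_sub_le_of_abs_le {x y : ℝ} (hr : 0 ≤ r) (hxy : |x| ≤ y) :
    |signedPow r y - signedPow r x| ≤ (r + 1) * y ^ r * (y - x) := by
  have hy : 0 ≤ y := (abs_nonneg x).trans hxy
  have hxy' : x ≤ y := (le_abs_self x).trans hxy
  rcases le_total 0 x with hx | hx
  · have hle : x ^ (r + 1) ≤ y ^ (r + 1) := rpow_le_rpow hx hxy' (by linarith)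
    have htangent := rpow_sub_rpow_le_mul_sub_s5 (by linarith : 1 ≤ r + 1) hx hxy'
    rw [signedPow_of_nonneg hr hy, signedPow_of_nonneg hr hx, abs_of_nonneg (sub_nonneg.2 hle)]
    rwa [add_sub_cancel_right] at htangent
  · -- here the bound already holds with the factor `1` in place of `r + 1`
    have hyr : 0 ≤ y ^ r := rpow_nonneg hy r
    have hxr : |x| ^ r * |x| ≤ y ^ r * |x| :=
      mul_le_mul_of_nonneg_right (rpow_le_rpow (abs_nonneg x) hxy hr) (abs_nonneg x)
    have hφx : signedPow r x = -(|x| ^ r * |x|) := by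
      rw [signedPow, abs_of_nonpos hx]; ring
    rw [hφx, signedPow, abs_of_nonneg hy, sub_neg_eq_add,
      abs_of_nonneg (add_nonneg (mul_nonneg hyr hy) (by positivity))]
    rw [abs_of_nonpos hx] at hxr ⊢
    nlinarith [mul_nonneg hr (mul_nonneg hyr (sub_nonneg.2 hxy'))]

lemma abs_signedPow_sub_le (hr : 0 ≤ r) (x y : ℝ) :
    |signedPow r y - signedPow r x| ≤ (r + 1) * max |x| |y| ^ r * |y - x| := by
  wlog hxy : |x| ≤ |y| generalizing x y
  · rw [abs_sub_comm, max_comm, abs_sub_comm y]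
    exact this y x (le_of_not_ge hxy)
  wlog hy : 0 ≤ y generalizing x y
  · have h := this (-x) (-y) (by rwa [abs_neg, abs_neg]) (by linarith)
    simp only [signedPow_neg, abs_neg, neg_sub_neg] at h
    rwa [abs_sub_comm (signedPow r x), abs_sub_comm x] at h
  rw [abs_of_nonneg hy] at hxy
  rw [max_eq_right (hxy.trans_eq (abs_of_nonneg hy).symm), abs_of_nonneg hy,
    abs_of_nonneg (sub_nonneg.2 ((le_abs_self x).trans hxy))]
  exact abs_signedPow_sub_le_of_abs_le hr hxy

end signedPow

/-- For real `a, b` and `p ≥ 2`: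
`||b|^{p-2} b − |a|^{p-2} a| ≤ (p−1)(|b|^{(p-2)/2} + |a|^{(p-2)/2}) ||b|^{(p-2)/2} b − |a|^{(p-2)/2} a|`. -/
theorem signed_power_difference_bound (p : ℝ) (hp : 2 ≤ p) (a b : ℝ) :
    abs (|b| ^ (p - 2) * b - |a| ^ (p - 2) * a) ≤
      (p - 1) * (|b| ^ ((p - 2) / 2) + |a| ^ ((p - 2) / 2)) *
        abs (|b| ^ ((p - 2) / 2) * b - |a| ^ ((p - 2) / 2) * a) := by
  set q := (p - 2) / 2 with hq_def
  change |signedPow (p - 2) b - signedPow (p - 2) a| ≤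
    (p - 1) * (|b| ^ q + |a| ^ q) * |signedPow q b - signedPow q a|
  have hq : 0 ≤ q := by positivity
  have hα : 0 ≤ q / (q + 1) := by positivity
  have key := abs_signedPow_sub_le hα (signedPow q a) (signedPow q b)
  rw [signedPow_div_signedPow hq, signedPow_div_signedPow hq,
    rpow_max (abs_nonneg _) (abs_nonneg _) hα, abs_signedPow_rpow_div hq,
    abs_signedPow_rpow_div hq, show 2 * q = p - 2 by ring] at key
  have hcoef : q / (q + 1) + 1 ≤ p - 1 := by
    linarith [div_le_self hq (by linarith : 1 ≤ q + 1)]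
  have hmax : max (|a| ^ q) (|b| ^ q) ≤ |b| ^ q + |a| ^ q :=
    max_le (le_add_of_nonneg_left (by positivity)) (le_add_of_nonneg_right (by positivity))
  exact key.trans (mul_le_mul_of_nonneg_right
    (mul_le_mul hcoef hmax (by positivity) (by linarith)) (abs_nonneg _))
end

section
/- Let p ≥ 2 and let u : ℝ → ℝ be differentiable. Define v(t) = |u(t)|^{(p-2)/2} u(t). If v is differentiable at t, then the function w(t) = |u(t)|^{p-2} u(t) is differentiable at t and w'(t) = (2(p−1)/p) · |u(t)|^{(p-2)/2} · v'(t). -/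
/-!
Writing `S r x = |x| ^ r * x`, signed powers compose by `S a ∘ S b = S ((b + 1) * a + b)`, so
`w = S ((p - 2) / p) ∘ v`. For `r ≥ 0`, `S r` is differentiable everywhere with derivative
`(r + 1) * |x| ^ r`, and the chain rule gives the formula.
-/

open Real

noncomputable def signedRpow (r x : ℝ) : ℝ := |x| ^ r * x

theorem abs_signedRpow {r : ℝ} (hr : r + 1 ≠ 0) (x : ℝ) : |signedRpow r x| = |x| ^ (r + 1) := by
  rw [signedRpow, abs_mul, abs_of_nonneg (rpow_nonneg (abs_nonneg x) r),
    rpow_add_one' (abs_nonneg x) hr]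

theorem signedRpow_signedRpow (a b x : ℝ) :
    signedRpow a (signedRpow b x) = signedRpow ((b + 1) * a + b) x := by
  rcases eq_or_ne x 0 with rfl | hx
  · simp [signedRpow]
  have hx' : 0 < |x| := abs_pos.2 hx
  rw [signedRpow, signedRpow, abs_mul, abs_of_pos (rpow_pos_of_pos hx' b), ← rpow_add_one hx'.ne',
    ← rpow_mul hx'.le, ← mul_assoc, ← rpow_add hx', signedRpow]

theorem hasDerivAt_signedRpow_of_ne_zero (r : ℝ) {x : ℝ} (hx : x ≠ 0) :
    HasDerivAt (signedRpow r) ((r + 1) * |x| ^ r) x := by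
  have hx' : 0 < |x| := abs_pos.2 hx
  refine (((hasDerivAt_abs hx).rpow_const (Or.inl hx'.ne')).mul (hasDerivAt_id' x)).congr_deriv ?_
  have hsign : (SignType.sign x : ℝ) * x = |x| := sign_mul_self x
  calc (SignType.sign x : ℝ) * r * |x| ^ (r - 1) * x + |x| ^ r * 1
      = r * (|x| ^ (r - 1) * |x|) + |x| ^ r := by rw [← hsign]; ring
    _ = (r + 1) * |x| ^ r := by rw [rpow_sub_one hx'.ne', div_mul_cancel₀ _ hx'.ne']; ring

theorem hasDerivAt_signedRpow_zero {r : ℝ} (hr : 0 ≤ r) :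
    HasDerivAt (signedRpow r) ((0 : ℝ) ^ r) 0 := by
  rw [hasDerivAt_iff_tendsto_slope]
  have hlim : Filter.Tendsto (fun x : ℝ => |x| ^ r) (nhds 0) (nhds ((0 : ℝ) ^ r)) := by
    simpa using ((continuous_abs.continuousAt (x := (0 : ℝ))).rpow_const (Or.inr hr)).tendsto
  refine (hlim.mono_left nhdsWithin_le_nhds).congr' ?_
  filter_upwards [self_mem_nhdsWithin] with x hx
  simp [slope_def_field, signedRpow, mul_div_cancel_right₀ _ (show x ≠ 0 from hx)]

theorem hasDerivAt_signedRpow {r : ℝ} (hr : 0 ≤ r) (x : ℝ) :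
    HasDerivAt (signedRpow r) ((r + 1) * |x| ^ r) x := by
  rcases eq_or_ne x 0 with rfl | hx
  · convert hasDerivAt_signedRpow_zero hr using 1
    rcases hr.eq_or_lt with rfl | hr
    · simp
    · simp [zero_rpow hr.ne']
  · exact hasDerivAt_signedRpow_of_ne_zero r hx

theorem signed_power_chain_rule_general (p : ℝ) (hp : 2 ≤ p) (u v : ℝ → ℝ)
    (hv : ∀ t, v t = |u t| ^ ((p - 2) / 2) * u t) (t : ℝ)
    (hvt : DifferentiableAt ℝ v t) :
    HasDerivAt (fun s => |u s| ^ (p - 2) * u s)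
      ((2 * (p - 1) / p) * |u t| ^ ((p - 2) / 2) * deriv v t) t := by
  have hp0 : p ≠ 0 := by positivity
  have hv' : v = signedRpow ((p - 2) / 2) ∘ u := funext hv
  have hw : (fun s => |u s| ^ (p - 2) * u s) = signedRpow ((p - 2) / p) ∘ v := by
    funext s
    rw [hv', Function.comp_apply, Function.comp_apply, signedRpow_signedRpow, signedRpow]
    congr 2
    field_simp
    ring
  have habs : |v t| ^ ((p - 2) / p) = |u t| ^ ((p - 2) / 2) := by
    rw [hv', Function.comp_apply, abs_signedRpow (by positivity), ← rpow_mul (abs_nonneg _)]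
    congr 1
    field_simp
    ring
  rw [hw]
  refine ((hasDerivAt_signedRpow (by positivity) (v t)).comp t hvt.hasDerivAt).congr_deriv ?_
  rw [habs]
  field_simp
  ring

/-- Chain rule: if `u` is differentiable and `v = |u|^{(p-2)/2} u` is differentiable at `t`, then
`w = |u|^{p-2} u` is differentiable at `t` with `w'(t) = (2(p−1)/p) |u(t)|^{(p-2)/2} v'(t)`. -/
theorem signed_power_chain_rule (p : ℝ) (hp : 2 ≤ p) (u v : ℝ → ℝ)
    (hu : Differentiable ℝ u) (hv : ∀ t, v t = |u t| ^ ((p - 2) / 2) * u t) (t : ℝ)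
    (hvt : DifferentiableAt ℝ v t) :
    HasDerivAt (fun s => |u s| ^ (p - 2) * u s)
      ((2 * (p - 1) / p) * |u t| ^ ((p - 2) / 2) * deriv v t) t :=
  signed_power_chain_rule_general p hp u v hv t hvt
end
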